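/- arXiv:2602.03897 — 2 statements merged into one kernel-verified Lean document; each statement's English description precedes it below -/
import Mathlib

section
/- For all real v > 0 and τ > 0, the integral from 0 to τ of exp(-t - v²/(4t)) / √(πt) dt equals (1/2)[e^{-v} erfc((v - 2τ)/(2√τ)) - e^{v} erfc((v + 2τ)/(2√τ))]. -/
/-!
The right-hand side, read as a function of `τ`, is itself a primitive of the integrand on
`(0, ∞)`: since `((v ∓ 2t) / (2√t))² = t ∓ v + v² / (4t)`, differentiating
`e^{∓v} erfc ((v ∓ 2t) / (2√t))` produces the integrand's exponential `e^{-t - v² / (4t)}` in both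
terms. For `v > 0` both arguments of `erfc` tend to `+∞` as `t → 0⁺`, so this primitive tends to
`0` there, and the fundamental theorem of calculus for the (nonnegative, hence integrable)
improper integral gives the formula.
-/

open Real MeasureTheory

/-- The complementary error function. -/
noncomputable def erfc (z : ℝ) : ℝ := (2 / Real.sqrt π) * ∫ u in Set.Ioi z, Real.exp (-u ^ 2)

open Set Filter Topology

theorem integral_Ioc_eq_sub_of_hasDerivAt_of_tendsto_of_nonneg {f f' : ℝ → ℝ} {a b L : ℝ}
    (hab : a < b) (hderiv : ∀ x ∈ Ioc a b, HasDerivAt f (f' x) x)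
    (hpos : ∀ x ∈ Ioo a b, 0 ≤ f' x) (hlim : Tendsto f (𝓝[>] a) (𝓝 L)) :
    ∫ x in Ioc a b, f' x = f b - L := by
  set g := Function.update f a L
  have hg_deriv : ∀ x ∈ Ioo a b, HasDerivAt g (f' x) x := fun x hx =>
    (hderiv x (Ioo_subset_Ioc_self hx)).congr_of_eventuallyEq <| by
      filter_upwards [Ioi_mem_nhds hx.1] with y hy using Function.update_of_ne hy.ne' _ _
  have hg_cont : ContinuousOn g (Icc a b) := by
    rw [continuousOn_update_iff, Icc_sdiff_left]
    exact ⟨fun x hx => (hderiv x hx).continuousAt.continuousWithinAt,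
      fun _ => hlim.mono_left (nhdsWithin_mono _ Ioc_subset_Ioi_self)⟩
  have hint : IntegrableOn f' (Ioc a b) :=
    intervalIntegral.integrableOn_deriv_of_nonneg hg_cont hg_deriv hpos
  rw [← intervalIntegral.integral_of_le hab.le,
    intervalIntegral.integral_eq_sub_of_hasDerivAt_of_le hab.le hg_cont hg_deriv
      ((intervalIntegrable_iff_integrableOn_Ioc_of_le hab.le).2 hint)]
  simp [g, hab.ne']

theorem integrable_exp_neg_sq : Integrable fun u : ℝ => exp (-u ^ 2) := by
  simpa using integrable_exp_neg_mul_sq one_pos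

theorem erfc_eq_erfc_zero_sub (z : ℝ) :
    erfc z = erfc 0 - 2 / √π * ∫ u in (0 : ℝ)..z, exp (-u ^ 2) := by
  rw [erfc, erfc, ← intervalIntegral.integral_Ioi_sub_Ioi' integrable_exp_neg_sq.integrableOn
    integrable_exp_neg_sq.integrableOn]
  ring

theorem hasDerivAt_erfc (z : ℝ) : HasDerivAt erfc (-(2 / √π) * exp (-z ^ 2)) z := by
  have hcont : Continuous fun u : ℝ => exp (-u ^ 2) := by fun_prop
  have hint := intervalIntegral.integral_hasDerivAt_right
    (integrable_exp_neg_sq.intervalIntegrable (a := 0) (b := z))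
    hcont.stronglyMeasurable.stronglyMeasurableAtFilter hcont.continuousAt
  rw [funext erfc_eq_erfc_zero_sub, neg_mul]
  exact (hint.const_mul _).const_sub _

theorem tendsto_erfc_atTop : Tendsto erfc atTop (𝓝 0) := by
  rw [← mul_zero (2 / √π)]
  exact (tendsto_integral_Ioi_zero tendsto_id).const_mul _

theorem hasDerivAt_erfc_div_sqrt (v c : ℝ) {t : ℝ} (ht : 0 < t) :
    HasDerivAt (fun t => erfc ((v + c * t) / (2 * √t)))
      (-(2 / √π) * exp (-((v + c * t) / (2 * √t)) ^ 2) * ((c * t - v) / (4 * t * √t))) t := by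
  have hnum : HasDerivAt (fun t => v + c * t) c t := by
    simpa using ((hasDerivAt_id t).const_mul c).const_add v
  have hden : HasDerivAt (fun t => 2 * √t) (2 * (1 / (2 * √t))) t :=
    (hasDerivAt_sqrt ht.ne').const_mul 2
  have hquot : HasDerivAt (fun t => (v + c * t) / (2 * √t)) ((c * t - v) / (4 * t * √t)) t := by
    refine (hnum.div hden (by positivity)).congr_deriv ?_
    field_simp
    rw [sq_sqrt ht.le]
    ring
  exact (hasDerivAt_erfc _).comp t hquot

theorem tendsto_div_two_sqrt_atTop (v c : ℝ) (hv : 0 < v) :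
    Tendsto (fun t => (v + c * t) / (2 * √t)) (𝓝[>] 0) atTop := by
  have hnum : Tendsto (fun t => v + c * t) (𝓝[>] 0) (𝓝 v) :=
    ((continuous_const.add (continuous_const.mul continuous_id)).tendsto' 0 v (by simp)).mono_left
      nhdsWithin_le_nhds
  have hden : Tendsto (fun t => 2 * √t) (𝓝[>] 0) (𝓝[>] 0) := by
    refine tendsto_nhdsWithin_iff.2 ⟨?_, ?_⟩
    · exact ((continuous_const.mul continuous_sqrt).tendsto' 0 0 (by simp)).mono_left
        nhdsWithin_le_nhds
    · filter_upwards [self_mem_nhdsWithin] with t (ht : 0 < t)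
      exact mul_pos two_pos (sqrt_pos.2 ht)
  simpa [div_eq_mul_inv] using hnum.pos_mul_atTop hv (tendsto_inv_nhdsGT_zero.comp hden)

noncomputable def heatPrimitive (v t : ℝ) : ℝ :=
  1 / 2 * (exp (-v) * erfc ((v - 2 * t) / (2 * √t)) - exp v * erfc ((v + 2 * t) / (2 * √t)))

theorem exp_mul_exp_neg_sq_div_two_sqrt (v c : ℝ) {t : ℝ} (ht : 0 < t) :
    exp (c * v / 2) * exp (-((v + c * t) / (2 * √t)) ^ 2) =
      exp (-(c ^ 2 * t / 4) - v ^ 2 / (4 * t)) := by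
  rw [← exp_add]
  congr 1
  field_simp
  rw [sq_sqrt ht.le]
  ring

theorem hasDerivAt_heatPrimitive (v : ℝ) {t : ℝ} (ht : 0 < t) :
    HasDerivAt (heatPrimitive v) (exp (-t - v ^ 2 / (4 * t)) / √(π * t)) t := by
  have h₁ := hasDerivAt_erfc_div_sqrt v (-2) ht
  have h₂ := hasDerivAt_erfc_div_sqrt v 2 ht
  have e₁ : exp (-v) * exp (-((v - 2 * t) / (2 * √t)) ^ 2) = exp (-t - v ^ 2 / (4 * t)) := by
    convert exp_mul_exp_neg_sq_div_two_sqrt v (-2) ht using 3 <;> ring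
  have e₂ : exp v * exp (-((v + 2 * t) / (2 * √t)) ^ 2) = exp (-t - v ^ 2 / (4 * t)) := by
    convert exp_mul_exp_neg_sq_div_two_sqrt v 2 ht using 3 <;> ring
  simp only [neg_mul, ← sub_eq_add_neg] at h₁
  refine (((h₁.const_mul (exp (-v))).sub (h₂.const_mul (exp v))).const_mul (1 / 2)).congr_deriv
    ?_
  rw [sqrt_mul pi_pos.le]
  linear_combination (norm := skip)
    ((2 * t + v) / (4 * t * √t) / √π) * e₁ + ((2 * t - v) / (4 * t * √t) / √π) * e₂
  field_simp
  ring

theorem tendsto_heatPrimitive {v : ℝ} (hv : 0 < v) :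
    Tendsto (heatPrimitive v) (𝓝[>] 0) (𝓝 0) := by
  have h₁ := tendsto_erfc_atTop.comp (tendsto_div_two_sqrt_atTop v (-2) hv)
  have h₂ := tendsto_erfc_atTop.comp (tendsto_div_two_sqrt_atTop v 2 hv)
  simp only [neg_mul, ← sub_eq_add_neg] at h₁
  have h := ((h₁.const_mul (exp (-v))).sub (h₂.const_mul (exp v))).const_mul (1 / 2)
  simp only [mul_zero, sub_zero] at h
  exact h

theorem stmt_0 (v τ : ℝ) (hv : 0 < v) (hτ : 0 < τ) :
    ∫ t in Set.Ioc (0 : ℝ) τ, Real.exp (-t - v ^ 2 / (4 * t)) / Real.sqrt (π * t) =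
      (1 / 2) * (Real.exp (-v) * erfc ((v - 2 * τ) / (2 * Real.sqrt τ)) -
        Real.exp v * erfc ((v + 2 * τ) / (2 * Real.sqrt τ))) := by
  rw [integral_Ioc_eq_sub_of_hasDerivAt_of_tendsto_of_nonneg hτ
    (fun t ht => hasDerivAt_heatPrimitive v ht.1) (fun t _ => by positivity)
    (tendsto_heatPrimitive hv), sub_zero, heatPrimitive]
end

section
/- For every ξ ≥ 0, the limit as τ → 0⁺ of f(ξ,τ) := (1/√(πτ)) ∫_ξ^∞ exp(-v²/(4τ)) · ₀F̄₁(;1; ξ(v-ξ)) dv is 0, provided ξ > 0. -/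
/-!
Since `₀F̄₁(;1;x) ≤ eˣ` for `x ≥ 0`, the integrand is dominated by `exp (-v²/(4τ) + ξ (v - ξ))`.
On `v > ξ` half of the Gaussian factor is at most `exp (-ξ²/(8τ))`, and completing the square in the
other half leaves a Gaussian of variance `4τ` centred at `4τξ`, whose integral `√(8πτ)` cancels the
normalisation. Hence `f(ξ,τ) ≤ √8 · exp (2τξ² - ξ²/(8τ))`, which tends to `0` as `τ → 0⁺`.
-/

open Real MeasureTheory

/-- The regularized confluent hypergeometric limit function ₀F̄₁(;1;x) = ∑ xᵏ/(k!)². -/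
noncomputable def F01reg (x : ℝ) : ℝ := ∑' k : ℕ, x ^ k / (k.factorial : ℝ) ^ 2

open Filter Set Topology

lemma F01reg_nonneg {x : ℝ} (hx : 0 ≤ x) : 0 ≤ F01reg x :=
  tsum_nonneg fun k => div_nonneg (pow_nonneg hx k) (by positivity)

lemma F01reg_le_exp {x : ℝ} (hx : 0 ≤ x) : F01reg x ≤ exp x := by
  have hterm (k : ℕ) : x ^ k / (k.factorial : ℝ) ^ 2 ≤ x ^ k / k.factorial := by
    have hk : (1 : ℝ) ≤ k.factorial := Nat.one_le_cast.mpr k.factorial_pos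
    exact div_le_div_of_nonneg_left (pow_nonneg hx k) (by positivity) (le_self_pow₀ hk two_ne_zero)
  rw [exp_eq_exp_ℝ, NormedSpace.exp_eq_tsum_div]
  exact Summable.tsum_le_tsum hterm
    ((summable_pow_div_factorial x).of_nonneg_of_le (fun k => by positivity) hterm)
    (summable_pow_div_factorial x)

lemma integrable_exp_neg_sq_sub_div (m : ℝ) {s : ℝ} (hs : 0 < s) :
    Integrable fun v : ℝ => exp (-(v - m) ^ 2 / s) := by
  simpa [neg_div, div_eq_inv_mul] using
    (integrable_exp_neg_mul_sq (inv_pos.mpr hs)).comp_sub_right m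

lemma integral_exp_neg_sq_sub_div (m s : ℝ) :
    ∫ v : ℝ, exp (-(v - m) ^ 2 / s) = √(π * s) := by
  rw [integral_sub_right_eq_self (fun v => exp (-v ^ 2 / s)) m, mul_comm]
  simpa [neg_div, div_eq_inv_mul, div_inv_eq_mul] using integral_gaussian s⁻¹

lemma heat_exponent_le {ξ τ v : ℝ} (hτ : 0 < τ) (hξ : 0 ≤ ξ) (hv : ξ ≤ v) :
    -v ^ 2 / (4 * τ) + ξ * (v - ξ) ≤
      (2 * ξ ^ 2 * τ - ξ ^ 2 / 8 / τ) + -(v - 4 * τ * ξ) ^ 2 / (8 * τ) := by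
  have hgap : (2 * ξ ^ 2 * τ - ξ ^ 2 / 8 / τ) + -(v - 4 * τ * ξ) ^ 2 / (8 * τ)
      - (-v ^ 2 / (4 * τ) + ξ * (v - ξ)) = (v ^ 2 - ξ ^ 2) / (8 * τ) + ξ ^ 2 := by
    field_simp
    ring
  have : 0 ≤ (v ^ 2 - ξ ^ 2) / (8 * τ) := div_nonneg (by nlinarith) (by positivity)
  linarith [sq_nonneg ξ]

lemma heat_integrand_nonneg {ξ v : ℝ} (hξ : 0 ≤ ξ) (hv : v ∈ Ioi ξ) (τ : ℝ) :
    0 ≤ exp (-v ^ 2 / (4 * τ)) * F01reg (ξ * (v - ξ)) :=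
  mul_nonneg (exp_nonneg _) (F01reg_nonneg (mul_nonneg hξ (sub_nonneg.mpr (le_of_lt hv))))

lemma heat_integral_nonneg {ξ : ℝ} (hξ : 0 ≤ ξ) (τ : ℝ) :
    0 ≤ (1 / √(π * τ)) * ∫ v in Ioi ξ, exp (-v ^ 2 / (4 * τ)) * F01reg (ξ * (v - ξ)) :=
  mul_nonneg (by positivity) <|
    setIntegral_nonneg measurableSet_Ioi fun _ hv => heat_integrand_nonneg hξ hv τ

lemma heat_integral_le {ξ τ : ℝ} (hξ : 0 ≤ ξ) (hτ : 0 < τ) :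
    (1 / √(π * τ)) * ∫ v in Ioi ξ, exp (-v ^ 2 / (4 * τ)) * F01reg (ξ * (v - ξ)) ≤
      √8 * exp (2 * ξ ^ 2 * τ - ξ ^ 2 / 8 / τ) := by
  set c := exp (2 * ξ ^ 2 * τ - ξ ^ 2 / 8 / τ)
  set G : ℝ → ℝ := fun v => c * exp (-(v - 4 * τ * ξ) ^ 2 / (8 * τ))
  have hG : Integrable G := (integrable_exp_neg_sq_sub_div _ (by positivity)).const_mul c
  have hdom : ∀ v ∈ Ioi ξ, exp (-v ^ 2 / (4 * τ)) * F01reg (ξ * (v - ξ)) ≤ G v := by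
    intro v hv
    have hx : 0 ≤ ξ * (v - ξ) := mul_nonneg hξ (sub_nonneg.mpr (le_of_lt hv))
    calc exp (-v ^ 2 / (4 * τ)) * F01reg (ξ * (v - ξ))
        ≤ exp (-v ^ 2 / (4 * τ)) * exp (ξ * (v - ξ)) :=
          mul_le_mul_of_nonneg_left (F01reg_le_exp hx) (exp_nonneg _)
      _ ≤ G v := by
          rw [← exp_add, show G v = exp _ * exp _ from rfl, ← exp_add]
          exact exp_le_exp.mpr (heat_exponent_le hτ hξ (le_of_lt hv))
  have hint : ∫ v in Ioi ξ, exp (-v ^ 2 / (4 * τ)) * F01reg (ξ * (v - ξ)) ≤ c * √(π * (8 * τ)) :=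
    calc ∫ v in Ioi ξ, exp (-v ^ 2 / (4 * τ)) * F01reg (ξ * (v - ξ))
        ≤ ∫ v in Ioi ξ, G v :=
          integral_mono_of_nonneg (ae_restrict_of_forall_mem measurableSet_Ioi
            fun _ hv => heat_integrand_nonneg hξ hv τ) hG.integrableOn
            (ae_restrict_of_forall_mem measurableSet_Ioi hdom)
      _ ≤ ∫ v, G v := setIntegral_le_integral hG (ae_of_all _ fun v => by positivity)
      _ = c * √(π * (8 * τ)) := by
          rw [integral_const_mul, integral_exp_neg_sq_sub_div]
  calc (1 / √(π * τ)) * ∫ v in Ioi ξ, exp (-v ^ 2 / (4 * τ)) * F01reg (ξ * (v - ξ))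
      ≤ (1 / √(π * τ)) * (c * √(π * (8 * τ))) := by gcongr
    _ = √8 * c := by
        rw [mul_left_comm π, sqrt_mul (by norm_num : (0 : ℝ) ≤ 8)]
        field_simp

lemma tendsto_exp_mul_sub_div_nhdsGT_zero (b : ℝ) {a : ℝ} (ha : 0 < a) :
    Tendsto (fun τ => exp (b * τ - a / τ)) (𝓝[>] 0) (𝓝 0) := by
  have hlin : Tendsto (fun τ : ℝ => b * τ) (𝓝[>] 0) (𝓝 0) := by
    simpa using ((continuous_const_mul b).tendsto 0).mono_left nhdsWithin_le_nhds
  have hdiv : Tendsto (fun τ : ℝ => a / τ) (𝓝[>] 0) atTop := by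
    simpa only [div_eq_mul_inv] using tendsto_inv_nhdsGT_zero.const_mul_atTop ha
  exact tendsto_exp_atBot.comp (hlin.add_atBot (tendsto_neg_atTop_atBot.comp hdiv))

theorem stmt_3 (ξ : ℝ) (hξ : 0 < ξ) :
    Filter.Tendsto
      (fun τ : ℝ =>
        (1 / Real.sqrt (π * τ)) *
          ∫ v in Set.Ioi ξ, Real.exp (-v ^ 2 / (4 * τ)) * F01reg (ξ * (v - ξ)))
      (nhdsWithin 0 (Set.Ioi 0)) (nhds 0) := by
  refine squeeze_zero' (Eventually.of_forall fun τ => heat_integral_nonneg hξ.le τ)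
    (eventually_mem_nhdsWithin.mono fun τ hτ => heat_integral_le hξ.le hτ) ?_
  simpa using (tendsto_exp_mul_sub_div_nhdsGT_zero (2 * ξ ^ 2)
    (by positivity : 0 < ξ ^ 2 / 8)).const_mul √8
end
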